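/- arXiv:2510.11640 — 4 statements merged into one kernel-verified Lean document; each statement's English description precedes it below -/
import Mathlib

section
/- Let α be a type and Ω a type of outcomes, and let ε, δ, q ∈ [0,1]. Suppose the mechanism M : Finset α → PMF Ω is (ε,δ)-differentially private with respect to the insertion neighboring relation. Define the subsampled mechanism A(S) := (Sub_q S).bind M. Then A is (2qε, qδ)-differentially private: for every S : Finset α, every x ∉ S, and every set E of outcomes, P[A(insert x S) ∈ E] ≤ e^{2qε}·P[A(S) ∈ E] + qδ and P[A(S) ∈ E] ≤ e^{2qε}·P[A(insert x S) ∈ E] + qδ. -/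
open scoped ENNReal

private lemma real_dir1 (ε q : ℝ) (hε0 : 0 ≤ ε) (hε1 : ε ≤ 1) (hq0 : 0 ≤ q) (hq1 : q ≤ 1) :
    1 - q + q * Real.exp ε ≤ Real.exp (2 * q * ε) := by
  have hc := convexOn_exp.2 (Set.mem_univ (0:ℝ)) (Set.mem_univ (1:ℝ))
    (by linarith : (0:ℝ) ≤ 1 - ε) hε0 (by ring)
  simp only [smul_eq_mul, mul_zero, mul_one, zero_add, Real.exp_zero] at hc
  have he : Real.exp 1 ≤ 3 := by
    have := Real.exp_one_lt_d9; linarith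
  have h1 : Real.exp ε ≤ 1 + 2 * ε := by nlinarith
  have h2 : 1 + 2*q*ε ≤ Real.exp (2*q*ε) := by linarith [Real.add_one_le_exp (2*q*ε)]
  nlinarith

private lemma real_dir2 (ε q : ℝ) (hε0 : 0 ≤ ε) (hq0 : 0 ≤ q) (hq1 : q ≤ 1) :
    Real.exp (-(2 * q * ε)) ≤ 1 - q + q * Real.exp (-ε) := by
  have hc := convexOn_exp.2 (Set.mem_univ (0:ℝ)) (Set.mem_univ (-(2*ε)))
    (by linarith : (0:ℝ) ≤ 1 - q) hq0 (by ring)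
  simp only [smul_eq_mul, mul_zero, zero_add, Real.exp_zero] at hc
  have h1 : Real.exp (-(2*ε)) ≤ Real.exp (-ε) := by
    apply Real.exp_le_exp.2; linarith
  have h2 : q * -(2*ε) = -(2*q*ε) := by ring
  rw [h2] at hc
  nlinarith



/-- Privacy amplification by Poisson subsampling:
if `M` is `(ε, δ)`-DP with respect to insertion of a single element, then the
subsampled mechanism `A S = (Sub q S).bind M` is `(2qε, qδ)`-DP.
The Poisson subsampling distribution `Sub` is characterized by the hypothesis
`hSub`: it assigns probability `q^|F| (1-q)^(|S \ F|)` to each `F ⊆ S`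
and `0` to every finite set not contained in `S`. -/
theorem stmt1 {α Ω : Type*} [DecidableEq α] (ε δ q : ℝ)
    (hε : ε ∈ Set.Icc (0 : ℝ) 1) (hδ : δ ∈ Set.Icc (0 : ℝ) 1)
    (hq : q ∈ Set.Icc (0 : ℝ) 1)
    (M : Finset α → PMF Ω)
    (hM : ∀ (S : Finset α) (x : α), x ∉ S → ∀ E : Set Ω,
      (M (insert x S)).toOuterMeasure E ≤
          ENNReal.ofReal (Real.exp ε) * (M S).toOuterMeasure E + ENNReal.ofReal δ ∧
      (M S).toOuterMeasure E ≤
          ENNReal.ofReal (Real.exp ε) * (M (insert x S)).toOuterMeasure E + ENNReal.ofReal δ)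
    (Sub : Finset α → PMF (Finset α))
    (hSub : ∀ S F : Finset α,
      (Sub S) F = if F ⊆ S then
        ENNReal.ofReal (q ^ F.card * (1 - q) ^ (S \ F).card) else 0) :
    ∀ (S : Finset α) (x : α), x ∉ S → ∀ E : Set Ω,
      ((Sub (insert x S)).bind M).toOuterMeasure E ≤
          ENNReal.ofReal (Real.exp (2 * q * ε)) * ((Sub S).bind M).toOuterMeasure E
            + ENNReal.ofReal (q * δ) ∧
      ((Sub S).bind M).toOuterMeasure E ≤
          ENNReal.ofReal (Real.exp (2 * q * ε)) * ((Sub (insert x S)).bind M).toOuterMeasure E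
            + ENNReal.ofReal (q * δ) := by
  obtain ⟨hε0, hε1⟩ := hε
  obtain ⟨hδ0, hδ1⟩ := hδ
  obtain ⟨hq0, hq1⟩ := hq
  intro S x hx E
  set P : ℝ≥0∞ := ∑ F ∈ S.powerset, Sub S F * (M F).toOuterMeasure E with hPdef
  set Q : ℝ≥0∞ := ∑ F ∈ S.powerset, Sub S F * (M (insert x F)).toOuterMeasure E with hQdef
  -- basic facts
  have hzero : ∀ T : Finset α, ∀ F ∉ T.powerset, Sub T F * (M F).toOuterMeasure E = 0 := by
    intro T F hF
    rw [Finset.mem_powerset] at hF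
    rw [hSub, if_neg hF, zero_mul]
  have hbindS : ((Sub S).bind M).toOuterMeasure E = P := by
    rw [PMF.toOuterMeasure_bind_apply]
    exact tsum_eq_sum (hzero S)
  -- decomposition of the subsampled insert mechanism
  have hbindxS : ((Sub (insert x S)).bind M).toOuterMeasure E
      = ENNReal.ofReal (1 - q) * P + ENNReal.ofReal q * Q := by
    rw [PMF.toOuterMeasure_bind_apply, tsum_eq_sum (hzero (insert x S)),
      Finset.sum_powerset_insert hx]
    congr 1
    · rw [Finset.mul_sum]
      refine Finset.sum_congr rfl fun F hF => ?_
      rw [Finset.mem_powerset] at hF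
      have hxF : x ∉ F := fun h => hx (hF h)
      have hsd : insert x S \ F = insert x (S \ F) := by
        ext a
        simp only [Finset.mem_sdiff, Finset.mem_insert]
        constructor
        · rintro ⟨h1 | h1, h2⟩
          · exact Or.inl h1
          · exact Or.inr ⟨h1, h2⟩
        · rintro (h1 | ⟨h1, h2⟩)
          · exact ⟨Or.inl h1, h1 ▸ hxF⟩
          · exact ⟨Or.inr h1, h2⟩
      have hxSF : x ∉ S \ F := fun h => hx (Finset.mem_sdiff.1 h).1
      rw [hSub, hSub, if_pos hF, if_pos (hF.trans (Finset.subset_insert x S)), hsd,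
        Finset.card_insert_of_notMem hxSF, ← mul_assoc,
        ← ENNReal.ofReal_mul (by linarith)]
      congr 2
      ring
    · rw [Finset.mul_sum]
      refine Finset.sum_congr rfl fun F hF => ?_
      rw [Finset.mem_powerset] at hF
      have hxF : x ∉ F := fun h => hx (hF h)
      have hsub : insert x F ⊆ insert x S := Finset.insert_subset_insert x hF
      have hsd : insert x S \ insert x F = S \ F := by
        ext a
        simp only [Finset.mem_sdiff, Finset.mem_insert, not_or]
        constructor
        · rintro ⟨h1 | h1, h2, h3⟩
          · exact absurd h1 h2
          · exact ⟨h1, h3⟩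
        · rintro ⟨h1, h2⟩
          exact ⟨Or.inr h1, fun h => hx (h ▸ h1), h2⟩
      rw [hSub, hSub, if_pos hsub, if_pos hF, hsd,
        Finset.card_insert_of_notMem hxF, ← mul_assoc,
        ← ENNReal.ofReal_mul hq0]
      congr 2
      ring
  have hsum1 : ∑ F ∈ S.powerset, Sub S F = 1 := by
    rw [← (Sub S).tsum_coe]
    refine (tsum_eq_sum fun F hF => ?_).symm
    rw [Finset.mem_powerset] at hF
    rw [hSub, if_neg hF]
  -- DP bounds transferred through the sum
  have hQP : Q ≤ ENNReal.ofReal (Real.exp ε) * P + ENNReal.ofReal δ := by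
    calc Q ≤ ∑ F ∈ S.powerset, Sub S F *
        (ENNReal.ofReal (Real.exp ε) * (M F).toOuterMeasure E + ENNReal.ofReal δ) := by
          refine Finset.sum_le_sum fun F hF => ?_
          rw [Finset.mem_powerset] at hF
          exact mul_le_mul_right (hM F x (fun h => hx (hF h)) E).1 _
      _ = ENNReal.ofReal (Real.exp ε) * P + ENNReal.ofReal δ := by
          simp only [mul_add, Finset.sum_add_distrib, hPdef, Finset.mul_sum, mul_left_comm,
            ← Finset.sum_mul, hsum1, one_mul]
  have hPQ : P ≤ ENNReal.ofReal (Real.exp ε) * Q + ENNReal.ofReal δ := by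
    calc P ≤ ∑ F ∈ S.powerset, Sub S F *
        (ENNReal.ofReal (Real.exp ε) * (M (insert x F)).toOuterMeasure E + ENNReal.ofReal δ) := by
          refine Finset.sum_le_sum fun F hF => ?_
          rw [Finset.mem_powerset] at hF
          exact mul_le_mul_right (hM F x (fun h => hx (hF h)) E).2 _
      _ = ENNReal.ofReal (Real.exp ε) * Q + ENNReal.ofReal δ := by
          simp only [mul_add, Finset.sum_add_distrib, hQdef, Finset.mul_sum, mul_left_comm,
            ← Finset.sum_mul, hsum1, one_mul]
  rw [hbindS, hbindxS]
  constructor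
  · -- direction 1
    calc ENNReal.ofReal (1 - q) * P + ENNReal.ofReal q * Q
        ≤ ENNReal.ofReal (1 - q) * P +
            ENNReal.ofReal q * (ENNReal.ofReal (Real.exp ε) * P + ENNReal.ofReal δ) := by
          exact add_le_add_right (mul_le_mul_right hQP _) _
      _ = ENNReal.ofReal (1 - q + q * Real.exp ε) * P + ENNReal.ofReal (q * δ) := by
          rw [ENNReal.ofReal_add (by linarith) (by positivity),
            ENNReal.ofReal_mul hq0, ENNReal.ofReal_mul hq0]
          ring
      _ ≤ ENNReal.ofReal (Real.exp (2 * q * ε)) * P + ENNReal.ofReal (q * δ) := by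
          gcongr
          exact real_dir1 ε q hε0 hε1 hq0 hq1
  · -- direction 2
    set c : ℝ := 1 - q + q * Real.exp (-ε) with hcdef
    have hcpos : 0 < c := by
      have := Real.exp_pos (-ε)
      have he1 : Real.exp (-ε) ≤ 1 := Real.exp_le_one_iff.2 (by linarith)
      nlinarith
    have hckey : ENNReal.ofReal c * P ≤
        (ENNReal.ofReal (1 - q) * P + ENNReal.ofReal q * Q)
          + ENNReal.ofReal (q * Real.exp (-ε) * δ) := by
      have h1 : ENNReal.ofReal (Real.exp (-ε)) * P ≤ Q + ENNReal.ofReal (Real.exp (-ε) * δ) := by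
        calc ENNReal.ofReal (Real.exp (-ε)) * P
            ≤ ENNReal.ofReal (Real.exp (-ε)) *
              (ENNReal.ofReal (Real.exp ε) * Q + ENNReal.ofReal δ) := mul_le_mul_right hPQ _
          _ = Q + ENNReal.ofReal (Real.exp (-ε) * δ) := by
              rw [mul_add, ← mul_assoc, ← ENNReal.ofReal_mul (Real.exp_pos _).le,
                ← Real.exp_add, ← ENNReal.ofReal_mul (Real.exp_pos _).le]
              simp
      calc ENNReal.ofReal c * P
          = ENNReal.ofReal (1 - q) * P +
              ENNReal.ofReal q * (ENNReal.ofReal (Real.exp (-ε)) * P) := by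
            rw [hcdef, ENNReal.ofReal_add (by linarith) (by positivity),
              ENNReal.ofReal_mul hq0]
            ring
        _ ≤ ENNReal.ofReal (1 - q) * P +
              ENNReal.ofReal q * (Q + ENNReal.ofReal (Real.exp (-ε) * δ)) := by
            exact add_le_add_right (mul_le_mul_right h1 _) _
        _ = (ENNReal.ofReal (1 - q) * P + ENNReal.ofReal q * Q)
              + ENNReal.ofReal (q * Real.exp (-ε) * δ) := by
            rw [mul_add, show q * Real.exp (-ε) * δ = q * (Real.exp (-ε) * δ) by ring,
              ENNReal.ofReal_mul hq0]
            ring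
    have hcne : ENNReal.ofReal c ≠ 0 := by
      simp [ENNReal.ofReal_eq_zero, not_le, hcpos]
    have hcnetop : ENNReal.ofReal c ≠ ⊤ := ENNReal.ofReal_ne_top
    have hcinv : (ENNReal.ofReal c)⁻¹ = ENNReal.ofReal c⁻¹ :=
      (ENNReal.ofReal_inv_of_pos hcpos).symm
    have hP2 : P ≤ (ENNReal.ofReal c)⁻¹ *
        ((ENNReal.ofReal (1 - q) * P + ENNReal.ofReal q * Q)
          + ENNReal.ofReal (q * Real.exp (-ε) * δ)) := by
      calc P = (ENNReal.ofReal c)⁻¹ * (ENNReal.ofReal c * P) := by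
            rw [← mul_assoc, ENNReal.inv_mul_cancel hcne hcnetop, one_mul]
        _ ≤ _ := mul_le_mul_right hckey _
    refine hP2.trans ?_
    rw [mul_add]
    gcongr
    · rw [hcinv]
      refine ENNReal.ofReal_le_ofReal ?_
      rw [inv_le_iff_one_le_mul₀ hcpos]
      calc (1:ℝ) = Real.exp (2*q*ε) * Real.exp (-(2*q*ε)) := by
            rw [← Real.exp_add]; simp
        _ ≤ Real.exp (2*q*ε) * c := by
            have := real_dir2 ε q hε0 hq0 hq1
            nlinarith [Real.exp_pos (2*q*ε)]
    · rw [hcinv, ← ENNReal.ofReal_mul (by positivity)]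
      refine ENNReal.ofReal_le_ofReal ?_
      have hec : Real.exp (-ε) ≤ c := by
        have he1 : Real.exp (-ε) ≤ 1 := Real.exp_le_one_iff.2 (by linarith)
        rw [hcdef]; nlinarith
      have hcinvle : c⁻¹ * Real.exp (-ε) ≤ 1 := by
        rw [← div_eq_inv_mul, div_le_one hcpos]; exact hec
      calc c⁻¹ * (q * Real.exp (-ε) * δ) = (c⁻¹ * Real.exp (-ε)) * (q * δ) := by ring
        _ ≤ 1 * (q * δ) := by
            have hqd : 0 ≤ q * δ := by positivity
            nlinarith
        _ = q * δ := one_mul _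
end

section
/- Let G be a simple graph on a finite vertex set V with edge set E, let ρ := max_{∅≠X⊆V} ρ_G(X) denote its maximum density, and assume ρ > 0. Let η ∈ (0,1) and q ∈ (0,1], and let F be a q-subsample of E with H = (V, F). Then for every nonempty X ⊆ V, the probability that |(1/q)·ρ_H(X) − ρ_G(X)| ≥ (η/2)·ρ is at most 3·exp(−q·|X|·η²·ρ/12). -/
open scoped Classical

/-- Number of edges of `G` with both endpoints in `X`, as a finset of edges. -/
noncomputable def edgesWithin {V : Type*} [Fintype V] [DecidableEq V]
    (G : SimpleGraph V) [DecidableRel G.Adj] (X : Finset V) : Finset (Sym2 V) :=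
  G.edgeFinset.filter (fun e => ∀ v ∈ e, v ∈ X)

/-- The density `ρ_G(X) = e_G(X) / |X|` of the subset `X` in `G`. -/
noncomputable def density {V : Type*} [Fintype V] [DecidableEq V]
    (G : SimpleGraph V) [DecidableRel G.Adj] (X : Finset V) : ℝ :=
  (edgesWithin G X).card / X.card

/-- The maximum density of `G`: the supremum of `ρ_G(X)` over nonempty `X ⊆ V`. -/
noncomputable def maxDensity {V : Type*} [Fintype V] [DecidableEq V]
    (G : SimpleGraph V) [DecidableRel G.Adj] : ℝ :=
  sSup {r : ℝ | ∃ X : Finset V, X.Nonempty ∧ r = density G X}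

/-- The density `ρ_H(X)` of `X` in the graph `H = (V, F)` determined by an
edge set `F`. -/
noncomputable def fdensity {V : Type*} [DecidableEq V]
    (F : Finset (Sym2 V)) (X : Finset V) : ℝ :=
  ((F.filter (fun e => ∀ v ∈ e, v ∈ X)).card : ℝ) / X.card

/-- The probability that a `q`-subsample of `E` (each element of `E` kept
independently with probability `q`) equals the subset `F ⊆ E`. -/
noncomputable def subsampleWeight {β : Type*} [DecidableEq β]
    (E : Finset β) (q : ℝ) (F : Finset β) : ℝ :=
  q ^ F.card * (1 - q) ^ (E \ F).card

/-- The probability that a `q`-subsample `F` of `E` satisfies the predicate `P`. -/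
noncomputable def subsampleProbEvent {β : Type*} [DecidableEq β]
    (E : Finset β) (q : ℝ) (P : Finset β → Prop) : ℝ :=
  ∑ F ∈ E.powerset, if P F then subsampleWeight E q F else 0

lemma weight_nonneg {β : Type*} [DecidableEq β] (E : Finset β) {q : ℝ}
    (hq0 : 0 ≤ q) (hq1 : q ≤ 1) (F : Finset β) : 0 ≤ subsampleWeight E q F :=
  mul_nonneg (pow_nonneg hq0 _) (pow_nonneg (by linarith) _)

lemma sum_weight_pow {β : Type*} [DecidableEq β] (E A : Finset β) (hA : A ⊆ E) (q x : ℝ) :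
    ∑ F ∈ E.powerset, subsampleWeight E q F * x ^ (F ∩ A).card
      = (1 - q + q * x) ^ A.card := by
  have key : ∀ F ∈ E.powerset, subsampleWeight E q F * x ^ (F ∩ A).card
      = (∏ e ∈ F, (q * (if e ∈ A then x else 1))) * ∏ e ∈ E \ F, (1 - q) := by
    intro F hF
    rw [Finset.prod_mul_distrib, Finset.prod_const, Finset.prod_ite_mem, Finset.prod_const,
      Finset.prod_const, subsampleWeight]
    ring
  rw [Finset.sum_congr rfl key, ← Finset.prod_add]
  have : ∀ e ∈ E, (q * (if e ∈ A then x else 1) + (1 - q))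
      = (if e ∈ A then 1 - q + q * x else 1) := by
    intro e _; split <;> ring
  rw [Finset.prod_congr rfl this, Finset.prod_ite_mem, Finset.prod_const,
    Finset.inter_eq_right.mpr hA]

lemma tail_upper {β : Type*} [DecidableEq β] (E A : Finset β) (hA : A ⊆ E) {q : ℝ}
    (hq0 : 0 ≤ q) (hq1 : q ≤ 1) (θ a : ℝ) (hθ : 0 ≤ θ) :
    subsampleProbEvent E q (fun F => a ≤ ((F ∩ A).card : ℝ))
      ≤ Real.exp (-(θ * a)) * (1 - q + q * Real.exp θ) ^ A.card := by
  rw [← sum_weight_pow E A hA q (Real.exp θ), subsampleProbEvent, Finset.mul_sum]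
  apply Finset.sum_le_sum
  intro F hF
  have hw := weight_nonneg E hq0 hq1 F
  split
  · rename_i h
    have h1 : (1:ℝ) ≤ Real.exp (-(θ * a)) * Real.exp θ ^ (F ∩ A).card := by
      rw [← Real.exp_nat_mul, ← Real.exp_add]
      have : (0:ℝ) ≤ -(θ * a) + (F ∩ A).card * θ := by nlinarith
      calc (1:ℝ) = Real.exp 0 := by simp
        _ ≤ _ := Real.exp_le_exp.mpr this
    calc subsampleWeight E q F = subsampleWeight E q F * 1 := by ring
      _ ≤ subsampleWeight E q F * (Real.exp (-(θ * a)) * Real.exp θ ^ (F ∩ A).card) := by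
          exact mul_le_mul_of_nonneg_left h1 hw
      _ = Real.exp (-(θ * a)) * (subsampleWeight E q F * Real.exp θ ^ (F ∩ A).card) := by ring
  · positivity

lemma tail_lower {β : Type*} [DecidableEq β] (E A : Finset β) (hA : A ⊆ E) {q : ℝ}
    (hq0 : 0 ≤ q) (hq1 : q ≤ 1) (θ a : ℝ) (hθ : 0 ≤ θ) :
    subsampleProbEvent E q (fun F => ((F ∩ A).card : ℝ) ≤ a)
      ≤ Real.exp (θ * a) * (1 - q + q * Real.exp (-θ)) ^ A.card := by
  rw [← sum_weight_pow E A hA q (Real.exp (-θ)), subsampleProbEvent, Finset.mul_sum]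
  apply Finset.sum_le_sum
  intro F hF
  have hw := weight_nonneg E hq0 hq1 F
  split
  · rename_i h
    have h1 : (1:ℝ) ≤ Real.exp (θ * a) * Real.exp (-θ) ^ (F ∩ A).card := by
      rw [← Real.exp_nat_mul, ← Real.exp_add]
      have : (0:ℝ) ≤ θ * a + (F ∩ A).card * (-θ) := by nlinarith
      calc (1:ℝ) = Real.exp 0 := by simp
        _ ≤ _ := Real.exp_le_exp.mpr this
    calc subsampleWeight E q F = subsampleWeight E q F * 1 := by ring
      _ ≤ subsampleWeight E q F * (Real.exp (θ * a) * Real.exp (-θ) ^ (F ∩ A).card) := by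
          exact mul_le_mul_of_nonneg_left h1 hw
      _ = Real.exp (θ * a) * (subsampleWeight E q F * Real.exp (-θ) ^ (F ∩ A).card) := by ring
  · positivity

lemma base_le {q : ℝ} (hq0 : 0 ≤ q) (hq1 : q ≤ 1) (u : ℝ) (m : ℕ) :
    (1 - q + q * Real.exp u) ^ m ≤ Real.exp (q * (Real.exp u - 1) * m) := by
  have he : (0:ℝ) < Real.exp u := Real.exp_pos u
  have h2 : (0:ℝ) ≤ 1 - q + q * Real.exp u := by nlinarith
  have h3 : 1 - q + q * Real.exp u ≤ Real.exp (q * (Real.exp u - 1)) := by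
    have := Real.add_one_le_exp (q * (Real.exp u - 1))
    nlinarith
  calc (1 - q + q * Real.exp u) ^ m ≤ (Real.exp (q * (Real.exp u - 1))) ^ m :=
        pow_le_pow_left₀ h2 h3 m
    _ = Real.exp (q * (Real.exp u - 1) * m) := by
        rw [← Real.exp_nat_mul]; ring_nf

/-- quadratic bound on exp on [-1,1] -/
lemma exp_quad {x : ℝ} (hx : |x| ≤ 1) : Real.exp x ≤ 1 + x + (3/4) * x ^ 2 := by
  have h := Real.exp_bound hx (n := 2) (by norm_num)
  have h1 : ∑ m ∈ Finset.range 2, x ^ m / m.factorial = 1 + x := by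
    simp [Finset.sum_range_succ]
  rw [h1] at h
  have h2 := (abs_sub_le_iff.1 h).1
  have h3 : |x| ^ 2 = x ^ 2 := sq_abs x
  rw [h3] at h2
  have h4 : ((2:ℕ).succ : ℝ) / ((2:ℕ).factorial * (2:ℕ)) = 3/4 := by
    norm_num [Nat.factorial]
  rw [h4] at h2
  linarith

lemma prob_le_add {β : Type*} [DecidableEq β] (E : Finset β) {q : ℝ}
    (hq0 : 0 ≤ q) (hq1 : q ≤ 1) (P Q R : Finset β → Prop)
    (h : ∀ F ∈ E.powerset, P F → Q F ∨ R F) :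
    subsampleProbEvent E q P ≤ subsampleProbEvent E q Q + subsampleProbEvent E q R := by
  unfold subsampleProbEvent
  rw [← Finset.sum_add_distrib]
  apply Finset.sum_le_sum
  intro F hF
  have hw := weight_nonneg E hq0 hq1 F
  by_cases hP : P F
  · rcases h F hF hP with hQ | hR
    · simp only [hP, hQ, if_true]
      have : (0:ℝ) ≤ if R F then subsampleWeight E q F else 0 := by positivity
      linarith
    · simp only [hP, hR, if_true]
      have : (0:ℝ) ≤ if Q F then subsampleWeight E q F else 0 := by positivity
      linarith
  · simp only [hP, if_false]
    have h1 : (0:ℝ) ≤ if Q F then subsampleWeight E q F else 0 := by positivity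
    have h2 : (0:ℝ) ≤ if R F then subsampleWeight E q F else 0 := by positivity
    linarith

lemma prob_mono {β : Type*} [DecidableEq β] (E : Finset β) {q : ℝ}
    (hq0 : 0 ≤ q) (hq1 : q ≤ 1) (P Q : Finset β → Prop)
    (h : ∀ F ∈ E.powerset, P F → Q F) :
    subsampleProbEvent E q P ≤ subsampleProbEvent E q Q := by
  apply Finset.sum_le_sum
  intro F hF
  have hw := weight_nonneg E hq0 hq1 F
  by_cases hP : P F
  · simp [hP, h F hF hP]
  · simp only [hP, if_false]; positivity

lemma density_le_max {V : Type*} [Fintype V] [DecidableEq V]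
    (G : SimpleGraph V) [DecidableRel G.Adj] (X : Finset V) (hX : X.Nonempty) :
    density G X ≤ maxDensity G := by
  apply le_csSup
  · apply Set.Finite.bddAbove
    apply (Set.finite_range (density G)).subset
    rintro r ⟨Y, _, rfl⟩
    exact ⟨Y, rfl⟩
  · exact ⟨X, hX, rfl⟩

set_option maxHeartbeats 1000000 in
/-- Per-subset concentration of densities under `q`-subsampling
(implicit in [EHW16]): for every nonempty `X ⊆ V`, the probability that the
rescaled subsampled density `(1/q) ρ_H(X)` deviates from `ρ_G(X)` by at least
`(η/2) ρ` is at most `3 exp(- q |X| η² ρ / 12)`, where `ρ` is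
the maximum density of `G`. -/
theorem stmt2 {V : Type*} [Fintype V] [DecidableEq V]
    (G : SimpleGraph V) [DecidableRel G.Adj]
    (hρ : 0 < maxDensity G)
    (η q : ℝ) (hη : η ∈ Set.Ioo (0 : ℝ) 1) (hq : q ∈ Set.Ioc (0 : ℝ) 1) :
    ∀ X : Finset V, X.Nonempty →
      subsampleProbEvent G.edgeFinset q
          (fun F => (η / 2) * maxDensity G ≤ |(1 / q) * fdensity F X - density G X|)
        ≤ 3 * Real.exp (-(q * X.card * η ^ 2 * maxDensity G / 12)) := by
  obtain ⟨hη0, hη1⟩ := hη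
  obtain ⟨hq0, hq1⟩ := hq
  intro X hX
  set ρ := maxDensity G with hρdef
  set E := G.edgeFinset with hE
  set A := edgesWithin G X with hAdef
  have hA : A ⊆ E := Finset.filter_subset _ _
  set n : ℝ := (X.card : ℝ) with hn
  have hn0 : 0 < n := by
    simp only [hn]
    exact_mod_cast Finset.card_pos.mpr hX
  set m : ℝ := (A.card : ℝ) with hm
  have hm0 : 0 ≤ m := by positivity
  -- densities
  have hdens : density G X = m / n := rfl
  have hmle : m ≤ n * ρ := by
    have := density_le_max G X hX
    rw [hdens] at this
    calc m = (m / n) * n := by field_simp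
      _ ≤ ρ * n := by apply mul_le_mul_of_nonneg_right this hn0.le
      _ = n * ρ := by ring
  -- fdensity in terms of intersection
  have hfd : ∀ F ∈ E.powerset, fdensity F X = ((F ∩ A).card : ℝ) / n := by
    intro F hF
    have hFE : F ⊆ E := Finset.mem_powerset.mp hF
    rw [fdensity, hn]
    congr 2
    congr 1
    ext e
    simp only [Finset.mem_filter, Finset.mem_inter, hAdef, edgesWithin]
    constructor
    · intro h; exact ⟨h.1, hFE h.1, h.2⟩
    · tauto
  set t : ℝ := (η / 2) * (q * n * ρ) with ht
  have ht0 : 0 < t := by positivity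
  set μ : ℝ := q * m with hμ
  have hμM : μ ≤ q * n * ρ := by
    rw [hμ]; nlinarith
  -- translate the event
  have hevent : ∀ F ∈ E.powerset,
      ((η / 2) * ρ ≤ |(1 / q) * fdensity F X - density G X|) →
      (μ + t ≤ ((F ∩ A).card : ℝ) ∨ ((F ∩ A).card : ℝ) ≤ μ - t) := by
    intro F hF h
    rw [hfd F hF, hdens] at h
    set S : ℝ := ((F ∩ A).card : ℝ) with hS
    have heq : (1 / q) * (S / n) - m / n = (S - μ) / (q * n) := by
      rw [hμ]; field_simp
    rw [heq, abs_div, abs_of_pos (by positivity : (0:ℝ) < q * n), le_div_iff₀ (by positivity)] at h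
    have h' : t ≤ |S - μ| := by
      rw [ht]; calc (η / 2) * (q * n * ρ) = η / 2 * ρ * (q * n) := by ring
        _ ≤ |S - μ| := h
    rcases le_abs.mp h' with h1 | h1
    · left; linarith
    · right; linarith
  -- handle m = 0
  by_cases hm0' : A.card = 0
  · have : subsampleProbEvent E q
        (fun F => (η / 2) * ρ ≤ |(1 / q) * fdensity F X - density G X|) = 0 := by
      apply Finset.sum_eq_zero
      intro F hF
      have hF0 : ((F ∩ A).card : ℝ) = 0 := by
        have hAe : A = ∅ := Finset.card_eq_zero.mp hm0'
        rw [hAe, Finset.inter_empty, Finset.card_empty, Nat.cast_zero]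
      rw [if_neg]
      intro h
      rcases hevent F hF h with h1 | h1 <;> rw [hF0] at h1 <;>
        · have hμ0 : μ = 0 := by rw [hμ, hm, hm0']; simp
          rw [hμ0] at h1; linarith
    rw [this]; positivity
  -- main case
  have hm1 : (1:ℝ) ≤ m := by
    have h1 : 1 ≤ A.card := Nat.one_le_iff_ne_zero.mpr hm0'
    rw [hm]; exact_mod_cast h1
  have hμ0 : 0 < μ := by rw [hμ]; nlinarith
  -- choose θ
  set θ : ℝ := min 1 (2 * t / (3 * μ)) with hθdef
  have hθ0 : 0 < θ := by
    apply lt_min one_pos; positivity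
  have hθ1 : θ ≤ 1 := min_le_left _ _
  have hkey : (3/4) * μ * θ ^ 2 - θ * t ≤ -(η ^ 2 * (q * n * ρ) / 12) := by
    rcases le_or_gt (2 * t / (3 * μ)) 1 with hc | hc
    · have hθeq : θ = 2 * t / (3 * μ) := min_eq_right hc
      rw [hθeq]
      have h1 : (3/4) * μ * (2 * t / (3 * μ)) ^ 2 - (2 * t / (3 * μ)) * t
          = -(t ^ 2 / (3 * μ)) := by
        field_simp; ring
      rw [h1]
      rw [neg_le_neg_iff, div_le_div_iff₀ (by norm_num) (by positivity)]
      have ht2 : t ^ 2 = η ^ 2 * (q * n * ρ) ^ 2 / 4 := by rw [ht]; ring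
      rw [ht2]
      have hM0 : 0 < q * n * ρ := by positivity
      nlinarith [sq_nonneg η]
    · have hθeq : θ = 1 := min_eq_left hc.le
      rw [hθeq]
      have hμlt : 3 * μ < 2 * t := by
        rw [lt_div_iff₀ (by positivity : (0:ℝ) < 3 * μ)] at hc
        linarith
      have hM0 : 0 < q * n * ρ := by positivity
      have ht' : t = η / 2 * (q * n * ρ) := ht
      nlinarith [sq_nonneg η, mul_pos hη0 hM0]
  -- the two tails
  have habs1 : |θ| ≤ 1 := by rw [abs_of_pos hθ0]; exact hθ1
  have habsneg : |(-θ)| ≤ 1 := by rw [abs_neg, abs_of_pos hθ0]; exact hθ1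
  have hupper : subsampleProbEvent E q (fun F => μ + t ≤ ((F ∩ A).card : ℝ))
      ≤ Real.exp ((3/4) * μ * θ ^ 2 - θ * t) := by
    calc subsampleProbEvent E q (fun F => μ + t ≤ ((F ∩ A).card : ℝ))
        ≤ Real.exp (-(θ * (μ + t))) * (1 - q + q * Real.exp θ) ^ A.card :=
          tail_upper E A hA hq0.le hq1 θ (μ + t) hθ0.le
      _ ≤ Real.exp (-(θ * (μ + t))) * Real.exp (q * (Real.exp θ - 1) * A.card) := by
          apply mul_le_mul_of_nonneg_left (base_le hq0.le hq1 θ A.card) (Real.exp_pos _).le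
      _ = Real.exp (q * (Real.exp θ - 1) * m - θ * (μ + t)) := by
          rw [← Real.exp_add, hm]; ring_nf
      _ ≤ Real.exp ((3/4) * μ * θ ^ 2 - θ * t) := by
          apply Real.exp_le_exp.mpr
          have he := exp_quad habs1
          have : q * (Real.exp θ - 1) * m ≤ μ * θ + (3/4) * μ * θ ^ 2 := by
            rw [hμ]; nlinarith
          linarith [this]
  have hlower : subsampleProbEvent E q (fun F => ((F ∩ A).card : ℝ) ≤ μ - t)
      ≤ Real.exp ((3/4) * μ * θ ^ 2 - θ * t) := by
    calc subsampleProbEvent E q (fun F => ((F ∩ A).card : ℝ) ≤ μ - t)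
        ≤ Real.exp (θ * (μ - t)) * (1 - q + q * Real.exp (-θ)) ^ A.card :=
          tail_lower E A hA hq0.le hq1 θ (μ - t) hθ0.le
      _ ≤ Real.exp (θ * (μ - t)) * Real.exp (q * (Real.exp (-θ) - 1) * A.card) := by
          apply mul_le_mul_of_nonneg_left (base_le hq0.le hq1 (-θ) A.card) (Real.exp_pos _).le
      _ = Real.exp (q * (Real.exp (-θ) - 1) * m + θ * (μ - t)) := by
          rw [← Real.exp_add, hm]; ring_nf
      _ ≤ Real.exp ((3/4) * μ * θ ^ 2 - θ * t) := by
          apply Real.exp_le_exp.mpr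
          have he := exp_quad habsneg
          have : q * (Real.exp (-θ) - 1) * m ≤ -(μ * θ) + (3/4) * μ * θ ^ 2 := by
            rw [hμ]; nlinarith
          linarith [this]
  -- combine
  have hexp_eq : -(q * (X.card : ℝ) * η ^ 2 * ρ / 12) = -(η ^ 2 * (q * n * ρ) / 12) := by
    rw [hn]; ring
  calc subsampleProbEvent E q
        (fun F => (η / 2) * ρ ≤ |(1 / q) * fdensity F X - density G X|)
      ≤ subsampleProbEvent E q (fun F => μ + t ≤ ((F ∩ A).card : ℝ))
        + subsampleProbEvent E q (fun F => ((F ∩ A).card : ℝ) ≤ μ - t) :=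
        prob_le_add E hq0.le hq1 _ _ _ hevent
    _ ≤ Real.exp ((3/4) * μ * θ ^ 2 - θ * t) + Real.exp ((3/4) * μ * θ ^ 2 - θ * t) := by
        linarith
    _ ≤ 2 * Real.exp (-(η ^ 2 * (q * n * ρ) / 12)) := by
        have := Real.exp_le_exp.mpr hkey
        linarith
    _ ≤ 3 * Real.exp (-(q * (X.card : ℝ) * η ^ 2 * ρ / 12)) := by
        rw [hexp_eq]
        have := (Real.exp_pos (-(η ^ 2 * (q * n * ρ) / 12))).le
        linarith
end

section
/- Let η ∈ (0,1) and for each integer i ≥ 1 define q_i := min(1, 3/(η·(1+2η)^{i−1})). Define c_i := 1 if q_i = 1 and c_i := 2·q_i if q_i < 1. Then the series Σ_{i=1}^∞ c_i converges and Σ_{i=1}^∞ c_i ≤ log(3/η)/log(1+2η) + 1 + (1+2η)/η. -/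
/-- Total privacy-budget bound: with subsampling rates
`q i = min 1 (3 / (η (1+2η)^(i-1)))` for `i ≥ 1`, and per-epoch privacy cost
`c i = 1` when `q i = 1` and `c i = 2 q i` when `q i < 1`, the total cost
`Σ_{i ≥ 1} c i` converges and is at most
`log(3/η) / log(1+2η) + 1 + (1+2η)/η` (natural logarithms). -/
theorem stmt9 (η : ℝ) (hη : η ∈ Set.Ioo (0 : ℝ) 1)
    (q c : ℕ → ℝ)
    (hq : ∀ i, 1 ≤ i → q i = min 1 (3 / (η * (1 + 2 * η) ^ (i - 1))))
    (hc : ∀ i, 1 ≤ i → c i = if q i = 1 then 1 else 2 * q i) :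
    Summable (fun i : ℕ => c (i + 1)) ∧
      ∑' i : ℕ, c (i + 1) ≤
        Real.log (3 / η) / Real.log (1 + 2 * η) + 1 + (1 + 2 * η) / η := by
  obtain ⟨hη0, hη1⟩ := hη
  set r : ℝ := 1 + 2 * η with hrdef
  have hr1 : 1 < r := by rw [hrdef]; linarith
  have hr0 : (0:ℝ) < r := lt_trans one_pos hr1
  have hrne : r ≠ 0 := ne_of_gt hr0
  have hηne : η ≠ 0 := ne_of_gt hη0
  have hrinv : r⁻¹ < 1 := inv_lt_one_of_one_lt₀ hr1
  have hrinv0 : (0:ℝ) ≤ r⁻¹ := by positivity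
  have hlogr : 0 < Real.log r := Real.log_pos hr1
  set a : ℕ → ℝ := fun i => 3 / (η * r ^ i) with hadef
  have hapos : ∀ i, 0 < a i := by
    intro i; simp only [hadef]; positivity
  have hcform : ∀ i : ℕ, c (i + 1) = if 1 ≤ a i then 1 else 2 * a i := by
    intro i
    have h1 := hq (i+1) (by omega)
    have h2 := hc (i+1) (by omega)
    simp only [Nat.add_sub_cancel] at h1
    rw [h2, h1]
    by_cases hai : 1 ≤ a i
    · rw [min_eq_left hai]
      simp [hai]
    · push_neg at hai
      rw [min_eq_right hai.le, if_neg (ne_of_lt hai), if_neg (not_le.mpr hai)]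
  have hamono : ∀ i j : ℕ, i ≤ j → a j ≤ a i := by
    intro i j h
    simp only [hadef]
    gcongr
    · exact hr1.le
  have hex : ∃ n, a n < 1 := by
    obtain ⟨n, hn⟩ := pow_unbounded_of_one_lt (3 / η) hr1
    refine ⟨n, ?_⟩
    have h3 : 3 < η * r ^ n := by
      have := (div_lt_iff₀ hη0).mp hn
      linarith [this]
    rw [hadef]
    exact (div_lt_one (by positivity)).mpr (by linarith)
  set N : ℕ := Nat.find hex with hNdef
  have hN : a N < 1 := Nat.find_spec hex
  have hNmin : ∀ m, m < N → 1 ≤ a m := fun m hm => not_lt.mp (Nat.find_min hex hm)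
  have hashift : ∀ i : ℕ, a (i + N) = a N * r⁻¹ ^ i := by
    intro i
    simp only [hadef]
    rw [pow_add, inv_pow]
    field_simp
  have hceq : ∀ i : ℕ, c (i + N + 1) = (2 * a N) * r⁻¹ ^ i := by
    intro i
    have hle : a (i + N) ≤ a N := hamono N (i + N) (by omega)
    rw [hcform (i + N), if_neg (not_le.mpr (lt_of_le_of_lt hle hN)), hashift]
    ring
  have htail : Summable (fun i : ℕ => (2 * a N) * r⁻¹ ^ i) :=
    (summable_geometric_of_lt_one hrinv0 hrinv).mul_left _
  have hsum : Summable (fun i : ℕ => c (i + 1)) := by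
    apply (summable_nat_add_iff N).mp
    exact htail.congr fun i => (hceq i).symm
  refine ⟨hsum, ?_⟩
  have hsplit := Summable.sum_add_tsum_nat_add N hsum
  -- first part
  have hfirst : (∑ i ∈ Finset.range N, c (i + 1)) = (N : ℝ) := by
    rw [Finset.sum_congr rfl (fun i hi => by
      rw [hcform i, if_pos (hNmin i (Finset.mem_range.mp hi))])]
    simp
  have htailval : (∑' i : ℕ, c (i + N + 1)) = (2 * a N) * (1 - r⁻¹)⁻¹ := by
    rw [tsum_congr hceq, tsum_mul_left, tsum_geometric_of_lt_one hrinv0 hrinv]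
  have hNbound : (N : ℝ) ≤ Real.log (3 / η) / Real.log r + 1 := by
    rcases Nat.eq_zero_or_pos N with h0 | hpos
    · rw [h0]
      have h1 : (1:ℝ) ≤ 3 / η := by
        rw [le_div_iff₀ hη0]; linarith
      have := Real.log_nonneg h1
      have : 0 ≤ Real.log (3 / η) / Real.log r := div_nonneg this hlogr.le
      push_cast
      linarith
    · obtain ⟨m, hm⟩ : ∃ m, N = m + 1 := ⟨N - 1, by omega⟩
      have h1 : 1 ≤ a m := hNmin m (by omega)
      have h2 : η * r ^ m ≤ 3 := by
        have := (one_le_div (show (0:ℝ) < η * r ^ m by positivity)).mp h1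
        linarith
      have h3 : r ^ m ≤ 3 / η := by
        rw [le_div_iff₀ hη0]; linarith [h2]
      have h4 : Real.log (r ^ m) ≤ Real.log (3 / η) :=
        Real.log_le_log (by positivity) h3
      rw [Real.log_pow] at h4
      have h5 : (m : ℝ) ≤ Real.log (3 / η) / Real.log r := by
        rw [le_div_iff₀ hlogr]; exact_mod_cast h4
      rw [hm]; push_cast; linarith
  have htailbound : (2 * a N) * (1 - r⁻¹)⁻¹ ≤ r / η := by
    have hinv : (1 - r⁻¹)⁻¹ = r / (2 * η) := by
      have h1 : 1 - r⁻¹ = 2 * η / r := by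
        field_simp
        rw [hrdef]; ring
      rw [h1, inv_div]
    rw [hinv]
    have heq : (2 * a N) * (r / (2 * η)) = a N * (r / η) := by
      field_simp
    rw [heq]
    calc a N * (r / η) ≤ 1 * (r / η) :=
          mul_le_mul_of_nonneg_right hN.le (by positivity)
      _ = r / η := one_mul _
  calc ∑' i : ℕ, c (i + 1)
      = (∑ i ∈ Finset.range N, c (i + 1)) + ∑' i : ℕ, c (i + N + 1) := hsplit.symm
    _ = (N : ℝ) + (2 * a N) * (1 - r⁻¹)⁻¹ := by rw [hfirst, htailval]
    _ ≤ (Real.log (3 / η) / Real.log r + 1) + r / η := add_le_add hNbound htailbound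
end

section
/- Let G and H be simple graphs on the same finite vertex set V, let q ∈ (0,1], η ∈ (0,1), α ≥ 0, and ζ ≥ 0, and let ρ denote the maximum density of G. Suppose (i) for every nonempty X ⊆ V, |(1/q)·ρ_H(X) − ρ_G(X)| ≤ η·ρ, and (ii) S ⊆ V is a nonempty subset with ρ_H(S) ≥ (max_{∅≠X⊆V} ρ_H(X))/(1+α) − ζ. Then ρ_G(S) ≥ ((1−η)/(1+α))·ρ − η·ρ − ζ/q. -/
open scoped Classical

/-- Deterministic transfer lemma: if rescaled densities of
`H` approximate those of `G` within additive error `η ρ` (where `ρ` is the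
maximum density of `G`), and `S` induces a `(1+α, ζ)`-approximate densest
subgraph of `H`, then `ρ_G(S) ≥ ((1-η)/(1+α)) ρ - η ρ - ζ/q`. -/
theorem stmt13 {V : Type*} [Fintype V] [DecidableEq V]
    (G H : SimpleGraph V) [DecidableRel G.Adj] [DecidableRel H.Adj]
    (q η α ζ : ℝ) (hq : q ∈ Set.Ioc (0 : ℝ) 1) (hη : η ∈ Set.Ioo (0 : ℝ) 1)
    (hα : 0 ≤ α) (hζ : 0 ≤ ζ)
    (happrox : ∀ X : Finset V, X.Nonempty →
      |(1 / q) * density H X - density G X| ≤ η * maxDensity G)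
    (S : Finset V) (hS : S.Nonempty)
    (hSdense : density H S ≥ maxDensity H / (1 + α) - ζ) :
    density G S ≥ ((1 - η) / (1 + α)) * maxDensity G - η * maxDensity G - ζ / q := by
  obtain ⟨hq0, hq1⟩ := hq
  obtain ⟨hη0, hη1⟩ := hη
  -- the set of densities is finite and nonempty
  have hsetG : {r : ℝ | ∃ X : Finset V, X.Nonempty ∧ r = density G X} =
      (fun X : Finset V => density G X) '' {X : Finset V | X.Nonempty} := by
    ext r; simp [eq_comm]
  have hfinG : {r : ℝ | ∃ X : Finset V, X.Nonempty ∧ r = density G X}.Finite := by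
    rw [hsetG]; exact (Set.toFinite _).image _
  have hneG : {r : ℝ | ∃ X : Finset V, X.Nonempty ∧ r = density G X}.Nonempty :=
    ⟨density G S, S, hS, rfl⟩
  have hsetH : {r : ℝ | ∃ X : Finset V, X.Nonempty ∧ r = density H X} =
      (fun X : Finset V => density H X) '' {X : Finset V | X.Nonempty} := by
    ext r; simp [eq_comm]
  have hfinH : {r : ℝ | ∃ X : Finset V, X.Nonempty ∧ r = density H X}.Finite := by
    rw [hsetH]; exact (Set.toFinite _).image _
  -- maxDensity G is attained at some X*
  have hmem : maxDensity G ∈ {r : ℝ | ∃ X : Finset V, X.Nonempty ∧ r = density G X} := hneG.csSup_mem hfinG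
  obtain ⟨X, hXne, hXeq⟩ := hmem
  -- maxDensity H bounds density H X from above... rather, density H X ≤ maxDensity H
  have hHX : density H X ≤ maxDensity H :=
    le_csSup hfinH.bddAbove ⟨X, hXne, rfl⟩
  -- from approximation at X : (1/q) * density H X ≥ (1 - η) * maxDensity G
  have h1 := happrox X hXne
  rw [← hXeq] at h1
  have h1' : (1 / q) * density H X ≥ (1 - η) * maxDensity G := by
    have := abs_le.mp h1
    nlinarith [this.1]
  -- hence maxDensity H ≥ q * (1 - η) * maxDensity G
  have h2 : maxDensity H ≥ q * ((1 - η) * maxDensity G) := by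
    have : density H X ≥ q * ((1 - η) * maxDensity G) := by
      have h := h1'
      rw [ge_iff_le, one_div, ← div_eq_inv_mul, le_div_iff₀ hq0] at h
      linarith
    linarith
  -- approximation at S
  have h3 := happrox S hS
  have h3' : density G S ≥ (1 / q) * density H S - η * maxDensity G := by
    have := (abs_le.mp h3).2
    linarith
  have hα1 : (0:ℝ) < 1 + α := by linarith
  have h4 : (1 / q) * density H S ≥ ((1 - η) / (1 + α)) * maxDensity G - ζ / q := by
    have h5 : density H S ≥ q * ((1 - η) * maxDensity G) / (1 + α) - ζ := by
      have : maxDensity H / (1 + α) ≥ q * ((1 - η) * maxDensity G) / (1 + α) := by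
        gcongr
      linarith
    have hq' : (0:ℝ) < 1 / q := by positivity
    have := mul_le_mul_of_nonneg_left h5 (le_of_lt hq')
    have heq : (1 / q) * (q * ((1 - η) * maxDensity G) / (1 + α) - ζ)
        = ((1 - η) / (1 + α)) * maxDensity G - ζ / q := by
      field_simp
    linarith [heq ▸ this]
  linarith
end
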